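/- arXiv:2311.01915 — 6 statements merged into one kernel-verified Lean document; each statement's English description precedes it below -/
import Mathlib

section
/- (Gradient estimate) Let G=(V,E) be a graph, X ⊂ V, Y = V∖X, and u: V → ℝ a bounded function satisfying Δ∞u(x) = f(x) for all x ∈ X, where f is bounded above. Then for every x ∈ X, every neighbor y of x, and every natural number N with N ≤ d(Y,x) (the combinatorial distance from x to Y), one has u(y) − u(x) ≤ (u(x) − inf_V u)/N + (N+1)·(sup f)/2. -/
/-- The discrete infinity Laplacian on a graph. -/
noncomputable def infLap {V : Type*} (G : SimpleGraph V) (u : V → ℝ) (x : V) : ℝ :=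
  sInf (u '' {y | G.Adj x y}) + sSup (u '' {y | G.Adj x y}) - 2 * u x

/-!
Fix `ε > 0` and walk greedily from `x`: from `z` step to a neighbour whose value is within `ε`
of the infimum of `u` over the neighbours of `z`. While the walk stays in `X`, the equation
`Δ∞ u = f ≤ sup f` says that this downward step is at least the upward slope
`sup_{t ∼ z} u t - u z` minus `sup f + ε`, and the new point has the old one as a neighbour, so
its upward slope is at least this step. Starting from the slope `u y - u x`, the `k`-th step is
therefore at least `u y - u x - k (sup f + ε)`. Since every walk of length `< N` stays in `X`,
summing `N` steps gives `N (u y - u x) - N (N + 1) / 2 · (sup f + ε) ≤ u x - inf u`;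
let `ε → 0`.
-/

open Filter Topology

namespace SimpleGraph

variable {V : Type*} {G : SimpleGraph V} {u : V → ℝ}

theorem exists_adj_sub_ge_of_infLap_le (hbelow : BddBelow (Set.range u)) {z t : V} (hzt : G.Adj z t)
    {M ε : ℝ} (hε : 0 < ε) (hz : infLap G u z ≤ M) :
    ∃ z', G.Adj z z' ∧ sSup (u '' {y | G.Adj z y}) - u z - M - ε ≤ u z - u z' := by
  have hne : (u '' {y | G.Adj z y}).Nonempty := ⟨u t, t, hzt, rfl⟩
  obtain ⟨_, ⟨z', hz', rfl⟩, hlt⟩ :=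
    (csInf_lt_iff (hbelow.mono (Set.image_subset_range _ _)) hne).1 (lt_add_of_pos_right _ hε)
  exact ⟨z', hz', by unfold infLap at hz; linarith⟩

theorem exists_walk_descent (habove : BddAbove (Set.range u)) (hbelow : BddBelow (Set.range u))
    {x y : V} (hxy : G.Adj x y) {N : ℕ} {M ε : ℝ} (hε : 0 < ε)
    (hM : ∀ z (w : G.Walk x z), w.length < N → infLap G u z ≤ M) :
    ∀ k ≤ N, ∃ z, (∃ w : G.Walk x z, w.length = k) ∧ (∃ t, G.Adj z t) ∧
      k * (u y - u x) - k * (k + 1) / 2 * (M + ε) ≤ u x - u z ∧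
      u y - u x - k * (M + ε) ≤ sSup (u '' {t | G.Adj z t}) - u z := by
  intro k
  induction k with
  | zero =>
    intro _
    have hy : u y ≤ sSup (u '' {t | G.Adj x t}) :=
      le_csSup (habove.mono (Set.image_subset_range _ _)) ⟨y, hxy, rfl⟩
    exact ⟨x, ⟨.nil, rfl⟩, ⟨y, hxy⟩, by simp, by simp only [Nat.cast_zero]; linarith⟩
  | succ k ih =>
    intro hk
    obtain ⟨z, ⟨w, rfl⟩, ⟨t, hzt⟩, hdrop, hslope⟩ := ih (Nat.le_of_succ_le hk)
    obtain ⟨z', hzz', hstep⟩ := exists_adj_sub_ge_of_infLap_le hbelow hzt hε (hM z w hk)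
    have hz : u z ≤ sSup (u '' {t | G.Adj z' t}) :=
      le_csSup (habove.mono (Set.image_subset_range _ _)) ⟨z, hzz'.symm, rfl⟩
    refine ⟨z', ⟨w.concat hzz', by simp⟩, ⟨z, hzz'.symm⟩, ?_, ?_⟩ <;>
      push_cast <;> linarith

theorem mul_sub_le_sub_sInf_of_infLap_le (habove : BddAbove (Set.range u))
    (hbelow : BddBelow (Set.range u)) {x y : V} (hxy : G.Adj x y) {N : ℕ} {M : ℝ}
    (hM : ∀ z (w : G.Walk x z), w.length < N → infLap G u z ≤ M) :
    N * (u y - u x) - N * (N + 1) / 2 * M ≤ u x - sInf (Set.range u) := by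
  have hε : ∀ ε > 0,
      N * (u y - u x) - N * (N + 1) / 2 * (M + ε) ≤ u x - sInf (Set.range u) := by
    intro ε hε
    obtain ⟨z, -, -, hdrop, -⟩ := exists_walk_descent habove hbelow hxy hε hM N le_rfl
    linarith [csInf_le hbelow (Set.mem_range_self z)]
  have hlim : Tendsto (fun ε : ℝ => N * (u y - u x) - N * (N + 1) / 2 * (M + ε)) (𝓝[>] 0)
      (𝓝 (N * (u y - u x) - N * (N + 1) / 2 * (M + 0))) :=
    ((by fun_prop : Continuous fun ε : ℝ =>
      N * (u y - u x) - N * (N + 1) / 2 * (M + ε)).tendsto 0).mono_left nhdsWithin_le_nhds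
  simpa using le_of_tendsto hlim (eventually_nhdsWithin_of_forall hε)

end SimpleGraph

/-- Gradient estimate: if `u` is a bounded solution of `Δ∞ u = f` on `X`, `f` bounded above,
then for `x ∈ X`, any neighbor `y` of `x`, and any `1 ≤ N` with `N ≤ d(V∖X, x)`
(expressed by: every walk from `x` to the complement of `X` has length at least `N`),
`u y - u x ≤ (u x - inf u)/N + (N+1) * sup_X f / 2`. -/
theorem stmt_1 {V : Type*} (G : SimpleGraph V) (X : Set V) (u f : V → ℝ)
    (hub : ∃ C, ∀ x, |u x| ≤ C)
    (hfbdd : BddAbove (f '' X))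
    (heq : ∀ x ∈ X, infLap G u x = f x) :
    ∀ x ∈ X, ∀ y, G.Adj x y → ∀ N : ℕ, 1 ≤ N →
      (∀ z ∈ Xᶜ, ∀ w : G.Walk x z, N ≤ w.length) →
      u y - u x ≤ (u x - sInf (Set.range u)) / N + (N + 1) * sSup (f '' X) / 2 := by
  intro x _ y hxy N hN hwalk
  obtain ⟨C, hC⟩ := hub
  have habove : BddAbove (Set.range u) :=
    ⟨C, by rintro _ ⟨z, rfl⟩; exact (abs_le.1 (hC z)).2⟩
  have hbelow : BddBelow (Set.range u) :=
    ⟨-C, by rintro _ ⟨z, rfl⟩; exact (abs_le.1 (hC z)).1⟩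
  have hM : ∀ z (w : G.Walk x z), w.length < N → infLap G u z ≤ sSup (f '' X) := by
    intro z w hw
    have hz : z ∈ X := by_contra fun hz => (hwalk z hz w).not_gt hw
    exact (heq z hz).trans_le (le_csSup hfbdd ⟨z, hz, rfl⟩)
  have hN0 : (0 : ℝ) < N := by exact_mod_cast hN
  have key := SimpleGraph.mul_sub_le_sub_sInf_of_infLap_le habove hbelow hxy hM
  rw [div_add' _ _ _ hN0.ne', le_div_iff₀ hN0]
  linarith
end

section
/- (Uniqueness) Let G=(V,E) be a graph, X ⊂ V with width(X) < ∞, f: X → ℝ bounded with f ≥ 0 (or f ≤ 0), and g: V∖X → ℝ bounded. If u and v are bounded functions on V satisfying Δ∞u = f = Δ∞v on X and u = g = v on V∖X, then u = v. -/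
open Set

theorem Set.image_neg_fun {α β : Type*} [InvolutiveNeg β] (f : α → β) (s : Set α) :
    (-f) '' s = -(f '' s) := by
  rw [← image_neg_eq_neg, image_image]
  rfl

namespace SimpleGraph

variable {V : Type*} {G : SimpleGraph V} {X : Set V} {u v : V → ℝ} {x y : V} {δ ε : ℝ}

variable (G) in
noncomputable def nbrSup (u : V → ℝ) (x : V) : ℝ := sSup (u '' G.neighborSet x)

variable (G) in
noncomputable def nbrInf (u : V → ℝ) (x : V) : ℝ := sInf (u '' G.neighborSet x)

theorem infLap_eq_nbrInf_add_nbrSup (u : V → ℝ) (x : V) :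
    infLap G u x = G.nbrInf u x + G.nbrSup u x - 2 * u x := rfl

theorem le_nbrSup (hu : BddAbove (range u)) (h : G.Adj x y) : u y ≤ G.nbrSup u x :=
  le_csSup (hu.mono (image_subset_range _ _)) ⟨y, h, rfl⟩

theorem nbrInf_le (hu : BddBelow (range u)) (h : G.Adj x y) : G.nbrInf u x ≤ u y :=
  csInf_le (hu.mono (image_subset_range _ _)) ⟨y, h, rfl⟩

theorem exists_adj_nbrSup_sub_lt (hne : (G.neighborSet x).Nonempty) (hε : 0 < ε) :
    ∃ y, G.Adj x y ∧ G.nbrSup u x - ε < u y := by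
  obtain ⟨_, ⟨y, hy, rfl⟩, hlt⟩ :=
    exists_lt_of_lt_csSup (hne.image u) (sub_lt_self (G.nbrSup u x) hε)
  exact ⟨y, hy, hlt⟩

theorem nbrInf_le_nbrInf_add (hu : BddBelow (range u)) (hne : (G.neighborSet x).Nonempty)
    (h : ∀ y, u y - v y ≤ δ) : G.nbrInf u x ≤ G.nbrInf v x + δ := by
  have : G.nbrInf u x - δ ≤ G.nbrInf v x := by
    refine le_csInf (hne.image v) ?_
    rintro _ ⟨y, hy, rfl⟩
    linarith [nbrInf_le hu hy, h y]
  linarith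

theorem nbrSup_neg : G.nbrSup (-u) x = -G.nbrInf u x := by
  rw [nbrSup, image_neg_fun, Real.sSup_neg, nbrInf]

theorem nbrInf_neg : G.nbrInf (-u) x = -G.nbrSup u x := by
  rw [nbrInf, image_neg_fun, Real.sInf_neg, nbrSup]

theorem infLap_neg (u : V → ℝ) (x : V) : infLap G (-u) x = -infLap G u x := by
  rw [infLap_eq_nbrInf_add_nbrSup, infLap_eq_nbrInf_add_nbrSup, nbrInf_neg, nbrSup_neg,
    Pi.neg_apply]
  ring

/-- On an isolated vertex `sSup ∅ = sInf ∅ = 0`, so `infLap G u x = -2 * u x` there. -/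
theorem nonempty_neighborSet_of_infLap_eq (h : infLap G u x = infLap G v x) (hne : u x ≠ v x) :
    (G.neighborSet x).Nonempty := by
  by_contra hempty
  rw [not_nonempty_iff_eq_empty] at hempty
  simp only [infLap_eq_nbrInf_add_nbrSup, nbrInf, nbrSup, hempty, image_empty, Real.sInf_empty,
    Real.sSup_empty] at h
  exact hne (by linarith)

theorem nbrSup_le_of_infLap_eq (hu : BddBelow (range u)) (hne : (G.neighborSet x).Nonempty)
    (hδ : ∀ y, u y - v y ≤ δ) (heq : infLap G u x = infLap G v x) :
    G.nbrSup v x ≤ G.nbrSup u x - 2 * (u x - v x) + δ := by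
  rw [infLap_eq_nbrInf_add_nbrSup, infLap_eq_nbrInf_add_nbrSup] at heq
  linarith [nbrInf_le_nbrInf_add hu hne hδ]

theorem sub_lt_of_nbrSup_sub_lt (hu : BddBelow (range u)) (hv : BddAbove (range v))
    (hδ : ∀ y, u y - v y ≤ δ) (heq : infLap G u x = infLap G v x) (hxy : G.Adj x y)
    (hy : G.nbrSup u x - ε < u y) :
    2 * (u x - v x) - δ - ε < u y - v y := by
  linarith [nbrSup_le_of_infLap_eq hu ⟨y, hxy⟩ hδ heq, le_nbrSup hv hxy]

theorem sub_le_of_adj (hu : BddBelow (range u)) (hv : BddAbove (range v))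
    (hδ : ∀ y, u y - v y ≤ δ) (hsub : 0 ≤ infLap G u x) (heq : infLap G u x = infLap G v x)
    (hxy : G.Adj x y) :
    2 * (u x - v x) - δ - 2 * (G.nbrSup u x - u x) ≤ u y - v y := by
  rw [infLap_eq_nbrInf_add_nbrSup] at hsub
  linarith [nbrSup_le_of_infLap_eq hu ⟨y, hxy⟩ hδ heq, le_nbrSup hv hxy, nbrInf_le hu hxy]

theorem sub_le_nbrSup_sub (hu : BddBelow (range u)) (hsub : 0 ≤ infLap G u x) (hxy : G.Adj x y) :
    u x - u y ≤ G.nbrSup u x - u x := by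
  rw [infLap_eq_nbrInf_add_nbrSup] at hsub
  linarith [nbrInf_le hu hxy]

/-- Each approximate steepest-ascent step at most doubles `δ - (u - v) + ε` and loses at most `ε`
of slope. -/
theorem exists_add_mul_le_of_near_max (hu : BddBelow (range u)) (hv : BddAbove (range v))
    (hsub : ∀ x ∈ X, 0 ≤ infLap G u x) (heq : ∀ x ∈ X, infLap G u x = infLap G v x)
    (hext : ∀ x ∉ X, u x = v x) (hδ : ∀ y, u y - v y ≤ δ) (hε : 0 < ε) :
    ∀ (N : ℕ) (x : V), 2 ^ N * (δ - (u x - v x) + ε) < δ →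
      ∃ y, u x + N * (G.nbrSup u x - u x - N * ε) ≤ u y := by
  intro N
  induction N with
  | zero => exact fun x _ => ⟨x, by simp⟩
  | succ N ih =>
    intro x hgap
    have hgap₁ : 2 * (δ - (u x - v x) + ε) < δ :=
      calc _ ≤ 2 ^ (N + 1) * (δ - (u x - v x) + ε) := by
            gcongr
            · linarith [hδ x]
            · exact le_self_pow₀ one_le_two N.succ_ne_zero
        _ < δ := hgap
    have hxX : x ∈ X := by
      by_contra hX
      linarith [hext x hX, hδ x]
    have hne := nonempty_neighborSet_of_infLap_eq (heq x hxX) (by linarith [hδ x])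
    obtain ⟨b, hxb, hb⟩ := exists_adj_nbrSup_sub_lt (u := u) hne hε
    have hb_gap : 2 ^ N * (δ - (u b - v b) + ε) < δ :=
      calc _ ≤ 2 ^ N * (2 * (δ - (u x - v x) + ε)) := by
            gcongr
            linarith [sub_lt_of_nbrSup_sub_lt hu hv hδ (heq x hxX) hxb hb]
        _ = 2 ^ (N + 1) * (δ - (u x - v x) + ε) := by ring
        _ < δ := hgap
    have hbX : b ∈ X := by
      have : δ - (u b - v b) + ε < δ :=
        (le_mul_of_one_le_left (by linarith [hδ b]) (one_le_pow₀ one_le_two)).trans_lt hb_gap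
      by_contra hX
      linarith [hext b hX]
    have hslope := sub_le_nbrSup_sub hu (hsub b hbX) hxb.symm
    obtain ⟨y, hy⟩ := ih b hb_gap
    have : (N : ℝ) * (G.nbrSup u x - u x - ε - N * ε) ≤ N * (G.nbrSup u b - u b - N * ε) :=
      mul_le_mul_of_nonneg_left (by linarith) N.cast_nonneg
    refine ⟨y, ?_⟩
    push_cast
    nlinarith [mul_nonneg N.cast_nonneg hε.le]

theorem nbrSup_sub_lt_of_near_max (hu : BddAbove (range u)) (hu' : BddBelow (range u))
    (hv : BddAbove (range v)) (hsub : ∀ x ∈ X, 0 ≤ infLap G u x)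
    (heq : ∀ x ∈ X, infLap G u x = infLap G v x) (hext : ∀ x ∉ X, u x = v x)
    (hδ : ∀ y, u y - v y ≤ δ) (hδ_pos : 0 < δ) (hε : 0 < ε) :
    ∃ η > 0, ∀ x, δ - η < u x - v x → G.nbrSup u x - u x < ε := by
  obtain ⟨M, hM⟩ := id hu
  obtain ⟨m, hm⟩ := id hu'
  obtain ⟨N, hN⟩ := exists_nat_gt (2 * (M - m) / ε)
  have hN' : 2 * (M - m) < N * ε := (div_lt_iff₀ hε).mp hN
  set η := min (ε / (2 * (N + 1))) (δ / 2 ^ (N + 1)) with hη_def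
  have hη_pos : 0 < η := lt_min (by positivity) (by positivity)
  have hNη : N * η ≤ ε / 2 :=
    calc N * η ≤ N * (ε / (2 * (N + 1))) := by gcongr; exact min_le_left _ _
      _ ≤ ε / 2 := by
        rw [mul_div_assoc', div_le_div_iff₀ (by positivity) (by norm_num)]
        nlinarith
  have hη_δ : 2 ^ N * (2 * η) ≤ δ := by
    have := min_le_right (ε / (2 * (N + 1))) (δ / 2 ^ (N + 1))
    rw [← hη_def, le_div_iff₀ (by positivity), pow_succ] at this
    linarith
  refine ⟨η, hη_pos, fun x hx => ?_⟩
  by_contra! hslope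
  obtain ⟨y, hy⟩ := exists_add_mul_le_of_near_max hu' hv hsub heq hext hδ hη_pos N x
    (lt_of_lt_of_le (by gcongr; linarith) hη_δ)
  have : (N : ℝ) * (ε / 2) ≤ N * (G.nbrSup u x - u x - N * η) := by gcongr; linarith
  linarith [hM ⟨y, rfl⟩, hm ⟨x, rfl⟩]

theorem near_max_of_adj (hu : BddAbove (range u)) (hu' : BddBelow (range u))
    (hv : BddAbove (range v)) (hsub : ∀ x ∈ X, 0 ≤ infLap G u x)
    (heq : ∀ x ∈ X, infLap G u x = infLap G v x) (hext : ∀ x ∉ X, u x = v x)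
    (hδ : ∀ y, u y - v y ≤ δ) (hδ_pos : 0 < δ) :
    ∀ τ > 0, ∃ η > 0, ∀ x y, G.Adj x y → δ - (u x - v x) < η → δ - (u y - v y) < τ := by
  intro τ hτ
  obtain ⟨η, hη, hflat⟩ :=
    nbrSup_sub_lt_of_near_max hu hu' hv hsub heq hext hδ hδ_pos (show 0 < τ / 4 by positivity)
  refine ⟨min η (min (τ / 4) δ), lt_min hη (lt_min (by positivity) hδ_pos), fun x y hxy hx => ?_⟩
  simp only [lt_min_iff] at hx
  obtain ⟨hxη, hxτ, hxδ⟩ := hx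
  have hxX : x ∈ X := by
    by_contra hX
    linarith [hext x hX]
  linarith [sub_le_of_adj hu' hv hδ (hsub x hxX) (heq x hxX) hxy, hflat x (by linarith)]

theorem exists_forall_walk_lt_of_forall_adj_lt {φ : V → ℝ}
    (h : ∀ τ > 0, ∃ η > 0, ∀ x y, G.Adj x y → φ x < η → φ y < τ) (n : ℕ) :
    ∀ τ > 0, ∃ η > 0, ∀ x y (p : G.Walk x y), p.length ≤ n → φ x < η → φ y < τ := by
  induction n with
  | zero =>
    refine fun τ hτ => ⟨τ, hτ, fun x y p hp hx => ?_⟩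
    rwa [← p.eq_of_length_eq_zero (Nat.le_zero.mp hp)]
  | succ n ih =>
    intro τ hτ
    obtain ⟨η₁, hη₁, hwalk⟩ := ih τ hτ
    obtain ⟨η₂, hη₂, hadj⟩ := h η₁ hη₁
    refine ⟨min η₂ τ, lt_min hη₂ hτ, fun x y p hp hx => ?_⟩
    cases p with
    | nil => exact lt_of_lt_of_le hx (min_le_right _ _)
    | cons hxz q =>
      rw [Walk.length_cons] at hp
      exact hwalk _ _ q (by omega) (hadj _ _ hxz (lt_of_lt_of_le hx (min_le_left _ _)))

theorem le_of_infLap_eq_of_nonneg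
    (hwidth : ∃ W : ℕ, ∀ x ∈ X, ∃ y ∈ Xᶜ, ∃ p : G.Walk x y, p.length ≤ W)
    (hu : BddAbove (range u)) (hu' : BddBelow (range u))
    (hv : BddAbove (range v)) (hv' : BddBelow (range v)) (hsub : ∀ x ∈ X, 0 ≤ infLap G u x)
    (heq : ∀ x ∈ X, infLap G u x = infLap G v x) (hext : ∀ x ∉ X, u x = v x) :
    u ≤ v := by
  intro z
  by_contra! hz
  obtain ⟨W, hW⟩ := hwidth
  have hbdd : BddAbove (range fun x => u x - v x) := by
    obtain ⟨M, hM⟩ := hu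
    obtain ⟨m, hm⟩ := hv'
    exact ⟨M - m, by rintro _ ⟨x, rfl⟩; linarith [hM ⟨x, rfl⟩, hm ⟨x, rfl⟩]⟩
  set δ := sSup (range fun x => u x - v x)
  have hδ : ∀ y, u y - v y ≤ δ := fun y => le_csSup hbdd ⟨y, rfl⟩
  have hδ_pos : 0 < δ := by linarith [hδ z]
  obtain ⟨η, hη, hwalk⟩ := exists_forall_walk_lt_of_forall_adj_lt
    (near_max_of_adj hu hu' hv hsub heq hext hδ hδ_pos) W δ hδ_pos
  obtain ⟨_, ⟨x, rfl⟩, hx⟩ := exists_lt_of_lt_csSup (range_nonempty_iff_nonempty.mpr ⟨z⟩)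
    (sub_lt_self δ hη)
  have hexit : ∃ y ∈ Xᶜ, ∃ p : G.Walk x y, p.length ≤ W := by
    by_cases hxX : x ∈ X
    · exact hW x hxX
    · exact ⟨x, hxX, Walk.nil, Nat.zero_le _⟩
  obtain ⟨y, hyX, p, hp⟩ := hexit
  have := hwalk x y p hp (by linarith)
  linarith [hext y hyX]

theorem eq_of_infLap_eq_of_nonneg
    (hwidth : ∃ W : ℕ, ∀ x ∈ X, ∃ y ∈ Xᶜ, ∃ p : G.Walk x y, p.length ≤ W)
    (hu : ∃ C, ∀ x, |u x| ≤ C) (hv : ∃ C, ∀ x, |v x| ≤ C) (hsub : ∀ x ∈ X, 0 ≤ infLap G u x)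
    (heq : ∀ x ∈ X, infLap G u x = infLap G v x) (hext : ∀ x ∉ X, u x = v x) :
    u = v := by
  have bdd {w : V → ℝ} (hw : ∃ C, ∀ x, |w x| ≤ C) : BddBelow (range w) ∧ BddAbove (range w) :=
    isBounded_iff_bddBelow_bddAbove.mp
      (isBounded_iff_forall_norm_le.mpr (hw.imp fun _ hC => forall_mem_range.mpr hC))
  obtain ⟨hu', hu⟩ := bdd hu
  obtain ⟨hv', hv⟩ := bdd hv
  exact le_antisymm (le_of_infLap_eq_of_nonneg hwidth hu hu' hv hv' hsub heq hext)
    (le_of_infLap_eq_of_nonneg hwidth hv hv' hu hu' (fun x hx => heq x hx ▸ hsub x hx)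
      (fun x hx => (heq x hx).symm) fun x hx => (hext x hx).symm)

end SimpleGraph

theorem stmt_3_general {V : Type*} (G : SimpleGraph V) (X : Set V) (f g u v : V → ℝ)
    (hwidth : ∃ W : ℕ, ∀ x ∈ X, ∃ y ∈ Xᶜ, ∃ w : G.Walk x y, w.length ≤ W)
    (hsign : (∀ x ∈ X, 0 ≤ f x) ∨ (∀ x ∈ X, f x ≤ 0))
    (hubdd : ∃ C, ∀ x, |u x| ≤ C) (hvbdd : ∃ C, ∀ x, |v x| ≤ C)
    (hueq : ∀ x ∈ X, infLap G u x = f x) (hug : ∀ x ∈ Xᶜ, u x = g x)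
    (hveq : ∀ x ∈ X, infLap G v x = f x) (hvg : ∀ x ∈ Xᶜ, v x = g x) :
    u = v := by
  have hext : ∀ x ∉ X, u x = v x := fun x hx => (hug x hx).trans (hvg x hx).symm
  have heq : ∀ x ∈ X, infLap G u x = infLap G v x := fun x hx => (hueq x hx).trans (hveq x hx).symm
  rcases hsign with hpos | hneg
  · exact SimpleGraph.eq_of_infLap_eq_of_nonneg hwidth hubdd hvbdd
      (fun x hx => hueq x hx ▸ hpos x hx) heq hext
  · have abs_neg_le {w : V → ℝ} (hw : ∃ C, ∀ x, |w x| ≤ C) : ∃ C, ∀ x, |(-w) x| ≤ C :=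
      hw.imp fun C hC x => by simpa using hC x
    refine neg_injective (SimpleGraph.eq_of_infLap_eq_of_nonneg hwidth (abs_neg_le hubdd)
      (abs_neg_le hvbdd) (fun x hx => ?_) (fun x hx => ?_) fun x hx => ?_)
    · rw [SimpleGraph.infLap_neg, hueq x hx]
      linarith [hneg x hx]
    · rw [SimpleGraph.infLap_neg, SimpleGraph.infLap_neg, heq x hx]
    · rw [Pi.neg_apply, Pi.neg_apply, hext x hx]

/-- Uniqueness: on a subset `X` of finite width, for bounded `f` with `f ≥ 0` or `f ≤ 0`
on `X` and bounded boundary data `g`, bounded solutions of the Dirichlet problem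
`Δ∞ u = f` on `X`, `u = g` on `V∖X` are unique. -/
theorem stmt_3 {V : Type*} (G : SimpleGraph V) (X : Set V) (f g u v : V → ℝ)
    (hwidth : ∃ W : ℕ, ∀ x ∈ X, ∃ y ∈ Xᶜ, ∃ w : G.Walk x y, w.length ≤ W)
    (hfbdd : ∃ C, ∀ x ∈ X, |f x| ≤ C)
    (hsign : (∀ x ∈ X, 0 ≤ f x) ∨ (∀ x ∈ X, f x ≤ 0))
    (hgbdd : ∃ C, ∀ x ∈ Xᶜ, |g x| ≤ C)
    (hubdd : ∃ C, ∀ x, |u x| ≤ C) (hvbdd : ∃ C, ∀ x, |v x| ≤ C)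
    (hueq : ∀ x ∈ X, infLap G u x = f x) (hug : ∀ x ∈ Xᶜ, u x = g x)
    (hveq : ∀ x ∈ X, infLap G v x = f x) (hvg : ∀ x ∈ Xᶜ, v x = g x) :
    u = v :=
  stmt_3_general G X f g u v hwidth hsign hubdd hvbdd hueq hug hveq hvg
end

section
/- (Perron family is stable under the infimum at one point, subsolution direction) Let G=(V,E) be a graph, X ⊂ V, f: X → ℝ, g: V∖X → ℝ, and let A = {v bounded on V : Δ∞v ≤ f on X, v ≥ g on V∖X}. Assume A is nonempty and u(x) := inf_{v∈A} v(x) is finite everywhere. Then Δ∞u(x) ≤ f(x) for all x ∈ X. -/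
open Set Function

lemma sInf_add_sSup_image_le_of_le {V : Type*} {s : Set V} {u v : V → ℝ}
    (hu : BddBelow (u '' s)) (hv : BddAbove (v '' s)) (h : ∀ y ∈ s, u y ≤ v y) :
    sInf (u '' s) + sSup (u '' s) ≤ sInf (v '' s) + sSup (v '' s) := by
  rw [image_eq_range] at hu hv
  simp only [sInf_image', sSup_image']
  exact add_le_add (ciInf_mono hu fun y => h y y.2) (ciSup_mono hv fun y => h y y.2)

section InfLap

variable {V : Type*} (G : SimpleGraph V)

lemma infLap_le_add_of_le {u v : V → ℝ} {x : V} (hu : BddBelow (u '' {y | G.Adj x y}))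
    (hv : BddAbove (v '' {y | G.Adj x y})) (h : ∀ y, G.Adj x y → u y ≤ v y) :
    infLap G u x ≤ infLap G v x + 2 * (v x - u x) := by
  have := sInf_add_sSup_image_le_of_le hu hv h
  unfold infLap
  linarith

lemma infLap_update_self [DecidableEq V] (v : V → ℝ) (x : V) (a : ℝ) :
    infLap G (update v x a) x = infLap G v x + 2 * (v x - a) := by
  have : update v x a '' {y | G.Adj x y} = v '' {y | G.Adj x y} :=
    image_congr fun y hy => update_of_ne (G.ne_of_adj hy).symm _ _
  unfold infLap
  rw [this, update_self]
  ring

lemma infLap_le_of_le_of_eq {u v : V → ℝ} {x : V} (hu : BddBelow (u '' {y | G.Adj x y}))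
    (hv : BddAbove (v '' {y | G.Adj x y})) (h : ∀ y, G.Adj x y → u y ≤ v y) (hx : u x = v x) :
    infLap G u x ≤ infLap G v x := by
  simpa [hx] using infLap_le_add_of_le G hu hv h

end InfLap

def perronFamily {V : Type*} (G : SimpleGraph V) (X : Set V) (f g : V → ℝ) : Set (V → ℝ) :=
  {v | (∃ C, ∀ x, |v x| ≤ C) ∧ (∀ x ∈ X, infLap G v x ≤ f x) ∧ (∀ x ∈ Xᶜ, g x ≤ v x)}

lemma bddAbove_image_of_abs_le {ι : Type*} {v : ι → ℝ} {C : ℝ} (h : ∀ i, |v i| ≤ C)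
    (s : Set ι) : BddAbove (v '' s) :=
  ⟨C, forall_mem_image.2 fun i _ => (abs_le.1 (h i)).2⟩

lemma bddBelow_image_of_abs_le {ι : Type*} {v : ι → ℝ} {C : ℝ} (h : ∀ i, |v i| ≤ C)
    (s : Set ι) : BddBelow (v '' s) :=
  ⟨-C, forall_mem_image.2 fun i _ => (abs_le.1 (h i)).1⟩

namespace perronFamily

variable {V : Type*} {G : SimpleGraph V} {X : Set V} {f g v w : V → ℝ}

lemma bddAbove_image (hv : v ∈ perronFamily G X f g) (s : Set V) : BddAbove (v '' s) :=
  bddAbove_image_of_abs_le hv.1.choose_spec s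

lemma bddBelow_image (hv : v ∈ perronFamily G X f g) (s : Set V) : BddBelow (v '' s) :=
  bddBelow_image_of_abs_le hv.1.choose_spec s

lemma inf_mem (hv : v ∈ perronFamily G X f g) (hw : w ∈ perronFamily G X f g) :
    v ⊓ w ∈ perronFamily G X f g := by
  obtain ⟨Cv, hCv⟩ := hv.1
  obtain ⟨Cw, hCw⟩ := hw.1
  have hbdd : ∀ x, |(v ⊓ w) x| ≤ max Cv Cw := fun x =>
    abs_min_le_max_abs_abs.trans (max_le_max (hCv x) (hCw x))
  have of_touching {u} (hu : u ∈ perronFamily G X f g) (hle : v ⊓ w ≤ u) {x} (hx : x ∈ X)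
      (hux : (v ⊓ w) x = u x) : infLap G (v ⊓ w) x ≤ f x :=
    (infLap_le_of_le_of_eq G (bddBelow_image_of_abs_le hbdd _) (bddAbove_image hu _)
      (fun y _ => hle y) hux).trans (hu.2.1 x hx)
  refine ⟨⟨_, hbdd⟩, fun x hx => ?_, fun x hx => le_min (hv.2.2 x hx) (hw.2.2 x hx)⟩
  rcases le_total (v x) (w x) with h | h
  · exact of_touching hv inf_le_left hx (min_eq_left h)
  · exact of_touching hw inf_le_right hx (min_eq_right h)

lemma update_mem [DecidableEq V] (hv : v ∈ perronFamily G X f g) {x : V} {a : ℝ} (hx : x ∈ X)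
    (ha : a ≤ v x) (hslack : infLap G v x + 2 * (v x - a) ≤ f x) :
    update v x a ∈ perronFamily G X f g := by
  obtain ⟨C, hC⟩ := hv.1
  have hbdd : ∀ z, |update v x a z| ≤ max C |a| := by
    intro z
    rcases eq_or_ne z x with rfl | hz
    · rw [update_self]; exact le_max_right _ _
    · rw [update_of_ne hz]; exact (hC z).trans (le_max_left _ _)
  have hle : update v x a ≤ v := by
    intro z
    rcases eq_or_ne z x with rfl | hz
    · rwa [update_self]
    · rw [update_of_ne hz]
  refine ⟨⟨_, hbdd⟩, fun p hp => ?_, fun p hp => ?_⟩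
  · rcases eq_or_ne p x with rfl | hpx
    · rwa [infLap_update_self]
    · exact (infLap_le_of_le_of_eq G (bddBelow_image_of_abs_le hbdd _) (bddAbove_image hv _)
        (fun y _ => hle y) (update_of_ne hpx _ _)).trans (hv.2.1 p hp)
  · rw [update_of_ne (ne_of_mem_of_not_mem hx hp).symm]
    exact hv.2.2 p hp

section Infimum

variable {u : V → ℝ} (hu : ∀ z, IsGLB ((fun v => v z) '' perronFamily G X f g) (u z))
include hu

lemma two_mul_glb_add_le {x : V} (hx : x ∈ X) (hv : v ∈ perronFamily G X f g) :
    2 * u x + f x ≤ sInf (v '' {y | G.Adj x y}) + sSup (v '' {y | G.Adj x y}) := by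
  classical
  have hlap : infLap G v x ≤ f x := hv.2.1 x hx
  unfold infLap at hlap
  set a := (sInf (v '' {y | G.Adj x y}) + sSup (v '' {y | G.Adj x y}) - f x) / 2 with ha
  have hmem : update v x a ∈ perronFamily G X f g :=
    update_mem hv hx (by linarith) (by unfold infLap; linarith)
  have := (hu x).1 (mem_image_of_mem (fun v => v x) hmem)
  simp only [update_self] at this
  linarith

lemma bddBelow_glb_image_neighbors {x : V} {v₀ : V → ℝ} (hx : x ∈ X)
    (hv₀ : v₀ ∈ perronFamily G X f g) :
    BddBelow (u '' {y | G.Adj x y}) := by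
  refine ⟨2 * u x + f x - sSup (v₀ '' {y | G.Adj x y}), forall_mem_image.2 fun y hy => ?_⟩
  refine (hu y).2 (forall_mem_image.2 fun v hv => ?_)
  have hm := inf_mem hv₀ hv
  have hinf : sInf ((v₀ ⊓ v) '' {y | G.Adj x y}) ≤ v y :=
    (csInf_le (bddBelow_image hm _) (mem_image_of_mem _ hy)).trans (min_le_right _ _)
  have hsup : sSup ((v₀ ⊓ v) '' {y | G.Adj x y}) ≤ sSup (v₀ '' {y | G.Adj x y}) :=
    csSup_le (nonempty_of_mem hy |>.image _) (forall_mem_image.2 fun z hz =>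
      (min_le_left _ _).trans (le_csSup (bddAbove_image hv₀ _) (mem_image_of_mem _ hz)))
  linarith [two_mul_glb_add_le hu hx hm]

end Infimum

end perronFamily

/-- The Perron infimum of the family `A = {v bounded : Δ∞ v ≤ f on X, v ≥ g on V∖X}`
is itself a subsolution: `Δ∞ u ≤ f` on `X`. -/
theorem stmt_6 {V : Type*} (G : SimpleGraph V) (X : Set V) (f g : V → ℝ)
    (A : Set (V → ℝ))
    (hA : A = {v | (∃ C, ∀ x, |v x| ≤ C) ∧ (∀ x ∈ X, infLap G v x ≤ f x) ∧
      (∀ x ∈ Xᶜ, g x ≤ v x)})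
    (hAne : A.Nonempty)
    (u : V → ℝ) (hu : ∀ x, u x = sInf {r | ∃ v ∈ A, v x = r})
    (hfin : ∀ x, BddBelow {r | ∃ v ∈ A, v x = r}) :
    ∀ x ∈ X, infLap G u x ≤ f x := by
  change A = perronFamily G X f g at hA
  subst hA
  have hglb (z : V) : IsGLB ((fun v => v z) '' perronFamily G X f g) (u z) := by
    rw [hu z]
    exact isGLB_csInf (hAne.image _) (hfin z)
  obtain ⟨v₀, hv₀⟩ := hAne
  intro x hx
  have hbdd := perronFamily.bddBelow_glb_image_neighbors hglb hx hv₀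
  refine le_of_forall_pos_le_add fun ε hε => ?_
  obtain ⟨_, ⟨v, hv, rfl⟩, -, hvx⟩ :=
    (hglb x).exists_between (lt_add_of_pos_right (u x) (half_pos hε))
  have := infLap_le_add_of_le G hbdd (perronFamily.bddAbove_image hv _)
    fun y _ => (hglb y).1 (mem_image_of_mem _ hv)
  linarith [hv.2.1 x hx]
end

section
/- (Unbounded infinity harmonic function with zero boundary data) Consider the graph G with vertex set ℕ≥0 and edges 0∼k and k∼2k for every k ≥ 1. Let X = ℕ≥1. Then the function u(n) = n satisfies Δ∞u(n) = 0 for all n ∈ X and u(0) = 0; thus the Dirichlet problem Δ∞u = 0 on X with u(0) = 0 has both the zero solution and the unbounded solution u(n) = n. -/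
/-- The graph on `ℕ` with edges `0 ∼ k` and `k ∼ 2k` for every `k ≥ 1`. -/
def doublingGraph : SimpleGraph ℕ :=
  SimpleGraph.fromRel (fun m n => (m = 0 ∧ 1 ≤ n) ∨ (n = 2 * m ∧ 1 ≤ m))

section infLap

variable {V : Type*} (G : SimpleGraph V) (u : V → ℝ) (x : V)

lemma infLap_eq_of_isLeast_of_isGreatest {a b : ℝ} (ha : IsLeast (u '' {y | G.Adj x y}) a)
    (hb : IsGreatest (u '' {y | G.Adj x y}) b) : infLap G u x = a + b - 2 * u x := by
  rw [infLap, ha.csInf_eq, hb.csSup_eq]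

lemma infLap_const {y : V} (hxy : G.Adj x y) (c : ℝ) : infLap G (fun _ => c) x = 0 := by
  have himage : (fun _ => c) '' {y | G.Adj x y} = {c} := (Set.nonempty_of_mem hxy).image_const c
  rw [infLap, himage, csInf_singleton, csSup_singleton]
  ring

end infLap

namespace doublingGraph

lemma adj_zero {n : ℕ} (hn : 1 ≤ n) : doublingGraph.Adj n 0 :=
  ⟨by omega, Or.inr (Or.inl ⟨rfl, hn⟩)⟩

lemma adj_two_mul {n : ℕ} (hn : 1 ≤ n) : doublingGraph.Adj n (2 * n) :=
  ⟨by omega, Or.inl (Or.inr ⟨rfl, hn⟩)⟩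

lemma le_two_mul_of_adj {n m : ℕ} (hn : 1 ≤ n) (h : doublingGraph.Adj n m) : m ≤ 2 * n := by
  rcases h with ⟨_, (h | h) | (h | h)⟩ <;> omega

lemma infLap_natCast {n : ℕ} (hn : 1 ≤ n) : infLap doublingGraph (fun k => (k : ℝ)) n = 0 := by
  have hleast : IsLeast ((fun k : ℕ => (k : ℝ)) '' {m | doublingGraph.Adj n m}) 0 :=
    ⟨⟨0, adj_zero hn, Nat.cast_zero⟩, by rintro _ ⟨m, -, rfl⟩; positivity⟩
  have hgreatest : IsGreatest ((fun k : ℕ => (k : ℝ)) '' {m | doublingGraph.Adj n m})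
      (2 * n : ℝ) :=
    ⟨⟨2 * n, adj_two_mul hn, by push_cast; rfl⟩, by
      rintro _ ⟨m, hm, rfl⟩
      dsimp only
      exact_mod_cast le_two_mul_of_adj hn hm⟩
  rw [infLap_eq_of_isLeast_of_isGreatest _ _ _ hleast hgreatest]
  ring

end doublingGraph

lemma not_exists_forall_abs_natCast_le : ¬ ∃ C : ℝ, ∀ n : ℕ, |(n : ℝ)| ≤ C := by
  rintro ⟨C, hC⟩
  obtain ⟨n, hn⟩ := exists_nat_gt C
  have := hC n
  rw [Nat.abs_cast] at this
  linarith

/-- On the graph with edges `0 ∼ k` and `k ∼ 2k` (`k ≥ 1`), with `X = ℕ≥1`,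
both the zero function and the unbounded function `u(n) = n` solve
`Δ∞ u = 0` on `X` with `u(0) = 0`. -/
theorem stmt_13 :
    (∀ n : ℕ, 1 ≤ n → infLap doublingGraph (fun k => (k : ℝ)) n = 0) ∧
    ((fun k => (k : ℝ)) 0 = 0) ∧
    (∀ n : ℕ, 1 ≤ n → infLap doublingGraph (fun _ => (0 : ℝ)) n = 0) ∧
    ((fun _ : ℕ => (0 : ℝ)) 0 = 0) ∧
    ¬ ∃ C : ℝ, ∀ n : ℕ, |(n : ℝ)| ≤ C :=
  ⟨fun _ hn => doublingGraph.infLap_natCast hn, rfl,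
    fun _ hn => infLap_const _ _ (doublingGraph.adj_zero hn) 0, rfl,
    not_exists_forall_abs_natCast_le⟩
end

section
/- On the comb graph with tooth lengths l_n, the function u(n,l) = (l_n − l)/l_n satisfies Δ∞u(n,l) = −f(n,l) for all l < l_n and u(n,l_n) = 0, where f(n,0) = 1/l_n and f(n,l) = 0 for 0 < l < l_n. -/
/-- The comb graph with tooth lengths `l`: vertices `(n, k)` with `k ≤ l n`, shaft edges
`(n+1,0) ∼ (n,0)` and tooth edges `(n,k+1) ∼ (n,k)`. -/
def combGraph (l : ℕ → ℕ) : SimpleGraph {p : ℕ × ℕ // p.2 ≤ l p.1} :=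
  SimpleGraph.fromRel (fun p q =>
    (p.1.2 = 0 ∧ q.1.2 = 0 ∧ q.1.1 = p.1.1 + 1) ∨
    (p.1.1 = q.1.1 ∧ q.1.2 = p.1.2 + 1))

/-!
The profile `u` equals `1` on the whole shaft and is affine along each tooth. At an interior
tooth vertex the two neighbours therefore straddle `u` symmetrically and `Δ∞u = 0`; at a shaft
vertex `(n, 0)` the neighbour values are `1` (shaft) and `1 - 1 / l n` (first tooth vertex), so
`Δ∞u = -1 / l n`.
-/

theorem infLap_of_image_eq_pair {V : Type*} {G : SimpleGraph V} {u : V → ℝ} {x : V} {a b : ℝ}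
    (h : u '' {y | G.Adj x y} = {a, b}) : infLap G u x = a + b - 2 * u x := by
  rw [infLap, h, csInf_pair, csSup_pair, min_add_max]

namespace combGraph

variable {l : ℕ → ℕ}

theorem adj_iff {p q : {p : ℕ × ℕ // p.2 ≤ l p.1}} : (combGraph l).Adj p q ↔
    (p.1.2 = 0 ∧ q.1.2 = 0 ∧ (q.1.1 = p.1.1 + 1 ∨ p.1.1 = q.1.1 + 1)) ∨
    (p.1.1 = q.1.1 ∧ (q.1.2 = p.1.2 + 1 ∨ p.1.2 = q.1.2 + 1)) := by
  obtain ⟨⟨m, i⟩, hi⟩ := p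
  obtain ⟨⟨n, j⟩, hj⟩ := q
  simp only [combGraph, SimpleGraph.fromRel_adj, ne_eq, Subtype.mk.injEq, Prod.mk.injEq]
  omega

theorem neighborSet_tooth {n j : ℕ} (h : j + 1 < l n) :
    {y | (combGraph l).Adj ⟨(n, j + 1), h.le⟩ y} =
      {⟨(n, j), (by omega : j ≤ l n)⟩, ⟨(n, j + 2), h⟩} := by
  ext ⟨⟨m, i⟩, hi⟩
  simp only [Set.mem_ofPred_eq, adj_iff, Set.mem_insert_iff, Set.mem_singleton_iff,
    Subtype.mk.injEq, Prod.mk.injEq]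
  omega

theorem image_neighborSet_shaft {n : ℕ} (hn : 0 < l n) (w : {p : ℕ × ℕ // p.2 ≤ l p.1} → ℝ)
    {c : ℝ} (hw : ∀ p : {p : ℕ × ℕ // p.2 ≤ l p.1}, p.1.2 = 0 → w p = c) :
    w '' {y | (combGraph l).Adj ⟨(n, 0), Nat.zero_le _⟩ y} = {w ⟨(n, 1), hn⟩, c} := by
  apply subset_antisymm
  · rintro _ ⟨⟨⟨m, i⟩, hi⟩, hadj, rfl⟩
    simp only [Set.mem_ofPred_eq, adj_iff] at hadj
    rcases Nat.eq_zero_or_pos i with rfl | hi0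
    · exact Or.inr (hw _ rfl)
    · obtain rfl : m = n := by omega
      obtain rfl : i = 1 := by omega
      exact Or.inl rfl
  · rintro _ (rfl | rfl)
    · exact ⟨⟨(n, 1), hn⟩, adj_iff.2 (Or.inr ⟨rfl, Or.inl rfl⟩), rfl⟩
    · exact ⟨⟨(n + 1, 0), Nat.zero_le _⟩, adj_iff.2 (Or.inl ⟨rfl, rfl, Or.inl rfl⟩), hw _ rfl⟩

end combGraph

noncomputable def combProfile (l : ℕ → ℕ) (p : {p : ℕ × ℕ // p.2 ≤ l p.1}) : ℝ :=
  ((l p.1.1 : ℝ) - p.1.2) / l p.1.1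

section combProfile

variable {l : ℕ → ℕ}

theorem combProfile_eq_one_of_snd_eq_zero {p : {p : ℕ × ℕ // p.2 ≤ l p.1}}
    (hl : 0 < l p.1.1) (hp : p.1.2 = 0) : combProfile l p = 1 := by
  rw [combProfile, hp, Nat.cast_zero, sub_zero, div_self (by exact_mod_cast hl.ne')]

theorem combProfile_eq_zero_of_snd_eq {p : {p : ℕ × ℕ // p.2 ≤ l p.1}}
    (hp : p.1.2 = l p.1.1) : combProfile l p = 0 := by
  rw [combProfile, hp, sub_self, zero_div]

theorem infLap_combProfile_shaft (hl : ∀ n, 0 < l n) (n : ℕ) :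
    infLap (combGraph l) (combProfile l) ⟨(n, 0), Nat.zero_le _⟩ = -(1 / l n) := by
  have hone : ∀ p : {p : ℕ × ℕ // p.2 ≤ l p.1}, p.1.2 = 0 → combProfile l p = 1 :=
    fun p => combProfile_eq_one_of_snd_eq_zero (hl p.1.1)
  rw [infLap_of_image_eq_pair (combGraph.image_neighborSet_shaft (hl n) _ hone),
    hone ⟨(n, 0), Nat.zero_le _⟩ rfl, combProfile]
  have : (l n : ℝ) ≠ 0 := by exact_mod_cast (hl n).ne'
  field_simp
  push_cast
  ring

theorem infLap_combProfile_tooth {n j : ℕ} (h : j + 1 < l n) :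
    infLap (combGraph l) (combProfile l) ⟨(n, j + 1), h.le⟩ = 0 := by
  rw [infLap_of_image_eq_pair (by rw [combGraph.neighborSet_tooth h, Set.image_pair]),
    combProfile, combProfile, combProfile]
  push_cast
  ring

end combProfile

theorem stmt_14_general (l : ℕ → ℕ) (hl : ∀ n, 0 < l n)
    (u f : {p : ℕ × ℕ // p.2 ≤ l p.1} → ℝ)
    (hu : ∀ p, u p = ((l p.1.1 : ℝ) - p.1.2) / (l p.1.1 : ℝ))
    (hf : ∀ p, f p = if p.1.2 = 0 then 1 / (l p.1.1 : ℝ) else 0) :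
    (∀ p : {p : ℕ × ℕ // p.2 ≤ l p.1}, p.1.2 < l p.1.1 →
      infLap (combGraph l) u p = -(f p)) ∧
    (∀ p : {p : ℕ × ℕ // p.2 ≤ l p.1}, p.1.2 = l p.1.1 → u p = 0) := by
  obtain rfl : u = combProfile l := funext hu
  refine ⟨?_, fun p hp => combProfile_eq_zero_of_snd_eq hp⟩
  rintro ⟨⟨n, _ | j⟩, hk⟩ hlt
  · rw [hf, if_pos rfl]
    exact infLap_combProfile_shaft hl n
  · rw [hf, if_neg j.succ_ne_zero, neg_zero]
    exact infLap_combProfile_tooth hlt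

/-- On the comb graph with positive nondecreasing tooth lengths `l`, the function
`u(n,k) = (l n - k)/(l n)` satisfies `Δ∞ u (n,k) = -f(n,k)` for `k < l n` and
`u(n, l n) = 0`, where `f(n,0) = 1/(l n)` and `f(n,k) = 0` for `0 < k < l n`. -/
theorem stmt_14 (l : ℕ → ℕ) (hl : ∀ n, 0 < l n) (hmono : Monotone l)
    (u f : {p : ℕ × ℕ // p.2 ≤ l p.1} → ℝ)
    (hu : ∀ p, u p = ((l p.1.1 : ℝ) - p.1.2) / (l p.1.1 : ℝ))
    (hf : ∀ p, f p = if p.1.2 = 0 then 1 / (l p.1.1 : ℝ) else 0) :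
    (∀ p : {p : ℕ × ℕ // p.2 ≤ l p.1}, p.1.2 < l p.1.1 →
      infLap (combGraph l) u p = -(f p)) ∧
    (∀ p : {p : ℕ × ℕ // p.2 ≤ l p.1}, p.1.2 = l p.1.1 → u p = 0) :=
  stmt_14_general l hl u f hu hf
end

section
/- For C ≥ 2 and all integers 0 ≤ k ≤ n, the inequality (C³+k)/(C+k)³ ≤ (C+n)³/(C+n+k)³ holds; equivalently (n+C)³(k+C)³ ≥ (C+n+k)³(C³+k). -/
/-!
Put `x = k` and `y = n`. The left side is at most `((C+x)/(C+x+x))³` by a polynomial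
inequality that needs `x ≥ 1` (it fails for small real `x > 0`, so integrality of `k` matters),
and `((C+x)/(C+x+x))³ ≤ ((C+y)/(C+y+x))³` because `t ↦ t/(t+x)` is increasing and `C+x ≤ C+y`.
-/

lemma cube_add_div_cube_le {C x : ℝ} (hC : 2 ≤ C) (hx : 1 ≤ x) :
    (C ^ 3 + x) / (C + x) ^ 3 ≤ (C + x) ^ 3 / (C + x + x) ^ 3 := by
  have hC0 : 0 < C := by linarith
  rw [div_le_div_iff₀ (by positivity) (by positivity)]
  have hx0 : 0 < x := by linarith
  -- the difference of the two sides is `x` times a polynomial that is positive for `C ≥ 2, x ≥ 1`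
  have key : C ^ 3 + 6 * C ^ 2 * x + 12 * C * x ^ 2 + 8 * x ^ 3 ≤
      3 * C ^ 4 * x + 12 * C ^ 3 * x ^ 2 + 15 * C ^ 2 * x ^ 3 + 6 * C * x ^ 4 + x ^ 5 := by
    have h₁ : C + 6 * x ≤ 3 * C ^ 2 * x := by
      have hC2 : C + 6 ≤ 3 * C ^ 2 := by nlinarith
      nlinarith [mul_le_mul_of_nonneg_left hx (by nlinarith : (0 : ℝ) ≤ 3 * C ^ 2 - 6)]
    have h₂ : 1 ≤ C ^ 2 := by nlinarith
    nlinarith [mul_le_mul_of_nonneg_left h₁ (sq_nonneg C),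
      mul_le_mul_of_nonneg_left h₂ (by positivity : 0 ≤ 12 * C * x ^ 2),
      mul_le_mul_of_nonneg_left h₂ (by positivity : 0 ≤ 8 * x ^ 3),
      pow_pos hx0 3, pow_pos hx0 4, pow_pos hx0 5, mul_pos hC0 (pow_pos hx0 4)]
  nlinarith [mul_le_mul_of_nonneg_left key (by linarith : (0 : ℝ) ≤ x)]

lemma pow_div_add_pow_le {s t x : ℝ} (hs : 0 < s) (hst : s ≤ t) (hx : 0 ≤ x) (m : ℕ) :
    s ^ m / (s + x) ^ m ≤ t ^ m / (t + x) ^ m := by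
  rw [← div_pow, ← div_pow]
  refine pow_le_pow_left₀ (by positivity) ?_ m
  rw [div_le_div_iff₀ (by positivity) (by linarith)]
  nlinarith [mul_le_mul_of_nonneg_left hst hx]

/-- For `C ≥ 2` and integers `0 ≤ k ≤ n`,
`(C³+k)/(C+k)³ ≤ (C+n)³/(C+n+k)³`. -/
theorem stmt_15 (C : ℝ) (hC : 2 ≤ C) (n k : ℕ) (hkn : k ≤ n) :
    (C ^ 3 + (k : ℝ)) / (C + k) ^ 3 ≤ (C + n) ^ 3 / (C + n + k) ^ 3 := by
  rcases Nat.eq_zero_or_pos k with rfl | hk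
  · have hC0 : 0 < C := by linarith
    simp only [Nat.cast_zero, add_zero]
    rw [div_self (by positivity), div_self (by positivity)]
  calc (C ^ 3 + (k : ℝ)) / (C + k) ^ 3 ≤ (C + k) ^ 3 / (C + k + k) ^ 3 :=
        cube_add_div_cube_le hC (by exact_mod_cast hk)
    _ ≤ (C + n) ^ 3 / (C + n + k) ^ 3 :=
        pow_div_add_pow_le (by positivity) (by gcongr) k.cast_nonneg 3
end
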